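/- Let A be a transitive Lie algebroid with an A-invariant symmetric pairing on g = ker π, and set ĝ = A^∨ ×_{g^∨} g. Then the bracket [(a₁^∨,b₁),(a₂^∨,b₂)] = (b₁·a₂^∨, [b₁,b₂]) (where b·a^∨ is the coadjoint action, (b·a^∨)(c) = a^∨([c,b])), the pairing ⟨(a₁^∨,b₁),(a₂^∨,b₂)⟩ = ⟨b₁,b₂⟩, and the derivation ∂f = (π^∨(df), 0) endow ĝ with the structure of a Courant extension of g (a Courant algebroid with trivial anchor fitting in 0 → Ω¹_X → ĝ → g → 0). -/

import Mathlib

noncomputable section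

/-- The "vector fields" on the algebraic model of the space with function ring `O`. -/
abbrev Vec (O : Type*) [CommRing O] [Algebra ℂ O] := Derivation ℂ O O

/-- Algebraic model of a Courant `O`-algebroid: an `O`-module `Q` equipped with a
Leibniz bracket, an `O`-linear anchor into vector fields, a symmetric `O`-bilinear
pairing, and a derivation `∂ : O → Q`, subject to the Courant axioms. -/
structure CourantAlgebroid (O : Type*) [CommRing O] [Algebra ℂ O]
    (Q : Type*) [AddCommGroup Q] [Module O Q] where
  bracket : Q → Q → Q
  bracket_add_left : ∀ q₁ q₂ q₃, bracket (q₁ + q₂) q₃ = bracket q₁ q₃ + bracket q₂ q₃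
  bracket_add_right : ∀ q₁ q₂ q₃, bracket q₁ (q₂ + q₃) = bracket q₁ q₂ + bracket q₁ q₃
  anchor : Q →ₗ[O] Vec O
  pair : Q →ₗ[O] Q →ₗ[O] O
  pair_symm : ∀ q₁ q₂, pair q₁ q₂ = pair q₂ q₁
  par : O → Q
  par_add : ∀ f g, par (f + g) = par f + par g
  par_mul : ∀ f g, par (f * g) = f • par g + g • par f
  anchor_par : ∀ f, anchor (par f) = 0
  anchor_bracket : ∀ q₁ q₂, anchor (bracket q₁ q₂) = ⁅anchor q₁, anchor q₂⁆
  jacobi : ∀ q q₁ q₂, bracket q (bracket q₁ q₂)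
      = bracket (bracket q q₁) q₂ + bracket q₁ (bracket q q₂)
  leibniz : ∀ (q₁ q₂ : Q) (f : O), bracket q₁ (f • q₂) = f • bracket q₁ q₂ + anchor q₁ f • q₂
  invar : ∀ q q₁ q₂, pair (bracket q q₁) q₂ + pair q₁ (bracket q q₂)
      = anchor q (pair q₁ q₂)
  bracket_par : ∀ (q : Q) (f : O), bracket q (par f) = par (anchor q f)
  pair_par : ∀ (q : Q) (f : O), pair q (par f) = anchor q f
  symm_bracket : ∀ q₁ q₂, bracket q₁ q₂ + bracket q₂ q₁ = par (pair q₁ q₂)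

/-- `Ω_Q`: the `O`-submodule of `Q` generated by the image of the derivation `∂`. -/
def CourantAlgebroid.Omega {O : Type*} [CommRing O] [Algebra ℂ O]
    {Q : Type*} [AddCommGroup Q] [Module O Q] (C : CourantAlgebroid O Q) : Submodule O Q :=
  Submodule.span O (Set.range C.par)

/-- Algebraic model of a Lie `O`-algebroid. -/
structure LieAlgebroid (O : Type*) [CommRing O] [Algebra ℂ O]
    (A : Type*) [AddCommGroup A] [Module O A] where
  bracket : A → A → A
  bracket_add_left : ∀ a b c, bracket (a + b) c = bracket a c + bracket b c
  bracket_add_right : ∀ a b c, bracket a (b + c) = bracket a b + bracket a c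
  anchor : A →ₗ[O] Vec O
  skew : ∀ a b, bracket a b = - bracket b a
  jacobi : ∀ a b c, bracket a (bracket b c) = bracket (bracket a b) c + bracket b (bracket a c)
  anchor_bracket : ∀ a b, anchor (bracket a b) = ⁅anchor a, anchor b⁆
  leibniz : ∀ (a b : A) (f : O), bracket a (f • b) = f • bracket a b + anchor a f • b

variable {O : Type*} [CommRing O] [Algebra ℂ O]
variable {A : Type*} [AddCommGroup A] [Module O A]

/-- Sections of `ĝ = A^∨ ×_{g^∨} g`, modelled as pairs `(a^∨, b)` of a
functional on `A` and an element `b` of `g = ker π`, with `a^∨(c) = ⟨b,c⟩` for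
`c ∈ g`. -/
def IsGhat (L : LieAlgebroid O A) (P : A →ₗ[O] A →ₗ[O] O) (x : (A → O) × A) : Prop :=
  (∀ a b : A, x.1 (a + b) = x.1 a + x.1 b)
  ∧ (∀ (f : O) (a : A), x.1 (f • a) = f * x.1 a)
  ∧ L.anchor x.2 = 0
  ∧ (∀ c : A, L.anchor c = 0 → x.1 c = P x.2 c)

/-- The Leibniz bracket `[(a₁^∨,b₁),(a₂^∨,b₂)] = (b₁·a₂^∨, [b₁,b₂])`, where
`(b·a^∨)(c) = a^∨([c,b])` is the coadjoint action. -/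
def ghatBracket (L : LieAlgebroid O A) (x y : (A → O) × A) : (A → O) × A :=
  (fun c => y.1 (L.bracket c x.2), L.bracket x.2 y.2)

/-- The derivation `∂f = (π^∨(df), 0)`. -/
def ghatPar (L : LieAlgebroid O A) (f : O) : (A → O) × A :=
  (fun a => L.anchor a f, (0 : A))

/-! Every `(a^∨, b) ∈ ĝ` has `b ∈ ker π`, so for brackets with `b` on the left the anchor term of
the Leibniz rule of `A` disappears and the `A`-invariance of `⟨,⟩` becomes ad-invariance on `g`.
The Jacobi identity on the `A^∨`-component is the Jacobi identity of `A` read as the derivation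
rule for right brackets, and on `g` a functional `a^∨` coincides with `⟨b, -⟩`, which together
with invariance makes the symmetrized bracket `∂⟨b₁, b₂⟩`. -/

namespace LieAlgebroid

variable (L : LieAlgebroid O A)

lemma bracket_zero_right (a : A) : L.bracket a 0 = 0 := by
  simpa using L.bracket_add_right a 0 0

lemma bracket_bracket_left (a b c : A) :
    L.bracket (L.bracket a b) c = L.bracket a (L.bracket b c) + L.bracket (L.bracket a c) b := by
  rw [L.jacobi a b c, L.skew b (L.bracket a c)]
  abel

variable {L}

lemma anchor_apply_eq_zero {b : A} (hb : L.anchor b = 0) (f : O) : L.anchor b f = 0 := by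
  rw [hb]
  rfl

lemma anchor_bracket_eq_zero {b : A} (hb : L.anchor b = 0) (a : A) :
    L.anchor (L.bracket a b) = 0 := by
  rw [L.anchor_bracket, hb, lie_zero]

lemma bracket_smul_left {b : A} (hb : L.anchor b = 0) (f : O) (a : A) :
    L.bracket (f • a) b = f • L.bracket a b := by
  rw [L.skew, L.leibniz, anchor_apply_eq_zero hb, zero_smul, add_zero, ← smul_neg, ← L.skew]

lemma bracket_smul_right {a : A} (ha : L.anchor a = 0) (f : O) (b : A) :
    L.bracket a (f • b) = f • L.bracket a b := by
  rw [L.leibniz, anchor_apply_eq_zero ha, zero_smul, add_zero]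

lemma pair_bracket_add_pair_bracket_eq_zero {P : A →ₗ[O] A →ₗ[O] O}
    (P_invar : ∀ a b c : A, L.anchor b = 0 → L.anchor c = 0 →
      L.anchor a (P b c) = P (L.bracket a b) c + P b (L.bracket a c))
    {a b c : A} (ha : L.anchor a = 0) (hb : L.anchor b = 0) (hc : L.anchor c = 0) :
    P (L.bracket a b) c + P b (L.bracket a c) = 0 := by
  rw [← P_invar a b c hb hc, anchor_apply_eq_zero ha]

lemma pair_bracket_right_eq {P : A →ₗ[O] A →ₗ[O] O}
    (P_invar : ∀ a b c : A, L.anchor b = 0 → L.anchor c = 0 →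
      L.anchor a (P b c) = P (L.bracket a b) c + P b (L.bracket a c))
    {a b c : A} (ha : L.anchor a = 0) (hb : L.anchor b = 0) (hc : L.anchor c = 0) :
    P b (L.bracket c a) = P (L.bracket a b) c := by
  rw [L.skew c a, map_neg, ← add_eq_zero_iff_neg_eq',
    pair_bracket_add_pair_bracket_eq_zero P_invar ha hb hc]

end LieAlgebroid

open LieAlgebroid

namespace IsGhat

variable {L : LieAlgebroid O A} {P : A →ₗ[O] A →ₗ[O] O} {x y : (A → O) × A}

lemma map_add (hx : IsGhat L P x) (a b : A) : x.1 (a + b) = x.1 a + x.1 b := hx.1 a b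

lemma map_smul (hx : IsGhat L P x) (f : O) (a : A) : x.1 (f • a) = f * x.1 a := hx.2.1 f a

lemma anchor_snd (hx : IsGhat L P x) : L.anchor x.2 = 0 := hx.2.2.1

lemma fst_eq_pair (hx : IsGhat L P x) {c : A} (hc : L.anchor c = 0) : x.1 c = P x.2 c :=
  hx.2.2.2 c hc

lemma ghatPar (f : O) : IsGhat L P (ghatPar L f) :=
  ⟨fun a b => by simp [_root_.ghatPar], fun g a => by simp [_root_.ghatPar],
    by simp [_root_.ghatPar], fun c hc => by simp [_root_.ghatPar, anchor_apply_eq_zero hc]⟩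

lemma add (hx : IsGhat L P x) (hy : IsGhat L P y) : IsGhat L P (x + y) := by
  refine ⟨fun a b => ?_, fun f a => ?_, ?_, fun c hc => ?_⟩
  · simp only [Prod.fst_add, Pi.add_apply, hx.map_add, hy.map_add]
    ring
  · simp only [Prod.fst_add, Pi.add_apply, hx.map_smul, hy.map_smul]
    ring
  · simp [hx.anchor_snd, hy.anchor_snd]
  · simp [hx.fst_eq_pair hc, hy.fst_eq_pair hc]

lemma smul (f : O) (hx : IsGhat L P x) : IsGhat L P (f • x) := by
  refine ⟨fun a b => ?_, fun g a => ?_, ?_, fun c hc => ?_⟩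
  · simp only [Prod.smul_fst, Pi.smul_apply, smul_eq_mul, hx.map_add]
    ring
  · simp only [Prod.smul_fst, Pi.smul_apply, smul_eq_mul, hx.map_smul]
    ring
  · simp [hx.anchor_snd]
  · simp [hx.fst_eq_pair hc]

lemma ghatBracket
    (P_invar : ∀ a b c : A, L.anchor b = 0 → L.anchor c = 0 →
      L.anchor a (P b c) = P (L.bracket a b) c + P b (L.bracket a c))
    (hx : IsGhat L P x) (hy : IsGhat L P y) : IsGhat L P (ghatBracket L x y) := by
  refine ⟨fun a b => ?_, fun f a => ?_, anchor_bracket_eq_zero hy.anchor_snd x.2,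
    fun c hc => ?_⟩
  · simp only [_root_.ghatBracket, L.bracket_add_left, hy.map_add]
  · simp only [_root_.ghatBracket, bracket_smul_left hx.anchor_snd, hy.map_smul]
  · simp only [_root_.ghatBracket]
    rw [hy.fst_eq_pair (anchor_bracket_eq_zero hx.anchor_snd c),
      pair_bracket_right_eq P_invar hx.anchor_snd hy.anchor_snd hc]

lemma fst_eq_zero_of_snd_eq_zero (hx : IsGhat L P x) (h : x.2 = 0) {c : A}
    (hc : L.anchor c = 0) : x.1 c = 0 := by
  rw [hx.fst_eq_pair hc, h, LinearMap.map_zero, LinearMap.zero_apply]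

end IsGhat

section GhatOperations

variable {L : LieAlgebroid O A} {P : A →ₗ[O] A →ₗ[O] O} {x y z : (A → O) × A}

lemma ghatBracket_jacobi (hz : IsGhat L P z) :
    ghatBracket L x (ghatBracket L y z)
      = ghatBracket L (ghatBracket L x y) z + ghatBracket L y (ghatBracket L x z) := by
  refine Prod.ext (funext fun d => ?_) (L.jacobi x.2 y.2 z.2)
  simp only [ghatBracket, Prod.fst_add, Pi.add_apply]
  rw [bracket_bracket_left, hz.map_add]

lemma ghatBracket_smul_right (hx : IsGhat L P x) (f : O) :
    ghatBracket L x (f • y) = f • ghatBracket L x y :=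
  Prod.ext rfl (bracket_smul_right hx.anchor_snd f y.2)

lemma ghatBracket_ghatPar (hx : IsGhat L P x) (f : O) : ghatBracket L x (ghatPar L f) = 0 :=
  Prod.ext (funext fun c => anchor_apply_eq_zero (anchor_bracket_eq_zero hx.anchor_snd c) f)
    (L.bracket_zero_right x.2)

lemma ghatBracket_add_ghatBracket_swap
    (P_symm : ∀ a b, P a b = P b a)
    (P_invar : ∀ a b c : A, L.anchor b = 0 → L.anchor c = 0 →
      L.anchor a (P b c) = P (L.bracket a b) c + P b (L.bracket a c))
    (hx : IsGhat L P x) (hy : IsGhat L P y) :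
    ghatBracket L x y + ghatBracket L y x = ghatPar L (P x.2 y.2) := by
  refine Prod.ext (funext fun c => ?_) ?_
  · simp only [ghatBracket, ghatPar, Prod.fst_add, Pi.add_apply]
    rw [hy.fst_eq_pair (anchor_bracket_eq_zero hx.anchor_snd c),
      hx.fst_eq_pair (anchor_bracket_eq_zero hy.anchor_snd c),
      P_invar c x.2 y.2 hx.anchor_snd hy.anchor_snd, P_symm (L.bracket c x.2) y.2]
  · simp only [ghatBracket, ghatPar, Prod.snd_add]
    rw [L.skew x.2 y.2, neg_add_cancel]

lemma exists_isGhat_snd_eq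
    (hsplit : ∀ b : A, L.anchor b = 0 →
      ∃ lam : A →ₗ[O] O, ∀ c : A, L.anchor c = 0 → lam c = P b c)
    {b : A} (hb : L.anchor b = 0) : ∃ x, IsGhat L P x ∧ x.2 = b := by
  obtain ⟨lam, hlam⟩ := hsplit b hb
  exact ⟨(lam, b), ⟨lam.map_add, lam.map_smul, hb, hlam⟩, rfl⟩

end GhatOperations

theorem ghat_is_courant_extension_of_g_general
    (L : LieAlgebroid O A)
    (P : A →ₗ[O] A →ₗ[O] O)
    (P_symm : ∀ a b, P a b = P b a)
    (P_invar : ∀ a b c : A, L.anchor b = 0 → L.anchor c = 0 →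
      L.anchor a (P b c) = P (L.bracket a b) c + P b (L.bracket a c))
    (hsplit : ∀ b : A, L.anchor b = 0 →
      ∃ lam : A →ₗ[O] O, ∀ c : A, L.anchor c = 0 → lam c = P b c) :
    -- closure of `ĝ` under the operations
    (∀ x y, IsGhat L P x → IsGhat L P y → IsGhat L P (ghatBracket L x y))
    ∧ (∀ f : O, IsGhat L P (ghatPar L f))
    ∧ (∀ x y, IsGhat L P x → IsGhat L P y → IsGhat L P (x + y))
    ∧ (∀ (f : O) x, IsGhat L P x → IsGhat L P (f • x))
    -- Courant algebroid axioms (with trivial anchor)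
    ∧ (∀ x y z, IsGhat L P x → IsGhat L P y → IsGhat L P z →
        ghatBracket L x (ghatBracket L y z)
          = ghatBracket L (ghatBracket L x y) z + ghatBracket L y (ghatBracket L x z))
    ∧ (∀ (f : O) x y, IsGhat L P x → IsGhat L P y →
        ghatBracket L x (f • y) = f • ghatBracket L x y)
    ∧ (∀ x y z, IsGhat L P x → IsGhat L P y → IsGhat L P z →
        P (ghatBracket L x y).2 z.2 + P y.2 (ghatBracket L x z).2 = 0)
    ∧ (∀ (f : O) x, IsGhat L P x → ghatBracket L x (ghatPar L f) = 0)
    ∧ (∀ (f : O) x, IsGhat L P x → P x.2 (ghatPar L f).2 = 0)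
    ∧ (∀ x y, IsGhat L P x → IsGhat L P y →
        ghatBracket L x y + ghatBracket L y x = ghatPar L (P x.2 y.2))
    -- the exact sequence `0 → Ω¹ → ĝ → g → 0`
    ∧ (∀ b : A, L.anchor b = 0 → ∃ x, IsGhat L P x ∧ x.2 = b)
    ∧ (∀ x, IsGhat L P x → x.2 = 0 → ∀ c : A, L.anchor c = 0 → x.1 c = 0) :=
  ⟨fun _ _ hx hy => hx.ghatBracket P_invar hy,
    IsGhat.ghatPar,
    fun _ _ hx hy => hx.add hy,
    fun f _ hx => hx.smul f,
    fun _ _ _ _ _ hz => ghatBracket_jacobi hz,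
    fun f _ _ hx _ => ghatBracket_smul_right hx f,
    fun _ _ _ hx hy hz =>
      pair_bracket_add_pair_bracket_eq_zero P_invar hx.anchor_snd hy.anchor_snd hz.anchor_snd,
    fun f _ hx => ghatBracket_ghatPar hx f,
    fun _ _ _ => by simp [ghatPar],
    fun _ _ hx hy => ghatBracket_add_ghatBracket_swap P_symm P_invar hx hy,
    fun _ hb => exists_isGhat_snd_eq hsplit hb,
    fun _ hx h _ hc => hx.fst_eq_zero_of_snd_eq_zero h hc⟩

/-- for a transitive Lie algebroid `A` with `A`-invariant
symmetric pairing `P` on `g = ker π`, the bracket, pairing and derivation above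
endow `ĝ = A^∨ ×_{g^∨} g` with the structure of a Courant extension of `g`
(a Courant algebroid with trivial anchor fitting into `0 → Ω¹ → ĝ → g → 0`):
`ĝ` is closed under the operations, the bracket satisfies the Jacobi identity,
`O`-Leibniz rule and invariance (with trivial anchor), `∂` kills brackets and
pairings, the symmetrized bracket is `∂` of the pairing, the projection to `g`
is surjective, and its kernel consists of the one-forms (functionals pulled
back from `T`, i.e. killing `g`). -/
theorem ghat_is_courant_extension_of_g
    (L : LieAlgebroid O A)
    (hsurj : Function.Surjective L.anchor)
    (P : A →ₗ[O] A →ₗ[O] O)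
    (P_symm : ∀ a b, P a b = P b a)
    (P_invar : ∀ a b c : A, L.anchor b = 0 → L.anchor c = 0 →
      L.anchor a (P b c) = P (L.bracket a b) c + P b (L.bracket a c))
    (hsplit : ∀ b : A, L.anchor b = 0 →
      ∃ lam : A →ₗ[O] O, ∀ c : A, L.anchor c = 0 → lam c = P b c) :
    -- closure of `ĝ` under the operations
    (∀ x y, IsGhat L P x → IsGhat L P y → IsGhat L P (ghatBracket L x y))
    ∧ (∀ f : O, IsGhat L P (ghatPar L f))
    ∧ (∀ x y, IsGhat L P x → IsGhat L P y → IsGhat L P (x + y))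
    ∧ (∀ (f : O) x, IsGhat L P x → IsGhat L P (f • x))
    -- Courant algebroid axioms (with trivial anchor)
    ∧ (∀ x y z, IsGhat L P x → IsGhat L P y → IsGhat L P z →
        ghatBracket L x (ghatBracket L y z)
          = ghatBracket L (ghatBracket L x y) z + ghatBracket L y (ghatBracket L x z))
    ∧ (∀ (f : O) x y, IsGhat L P x → IsGhat L P y →
        ghatBracket L x (f • y) = f • ghatBracket L x y)
    ∧ (∀ x y z, IsGhat L P x → IsGhat L P y → IsGhat L P z →
        P (ghatBracket L x y).2 z.2 + P y.2 (ghatBracket L x z).2 = 0)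
    ∧ (∀ (f : O) x, IsGhat L P x → ghatBracket L x (ghatPar L f) = 0)
    ∧ (∀ (f : O) x, IsGhat L P x → P x.2 (ghatPar L f).2 = 0)
    ∧ (∀ x y, IsGhat L P x → IsGhat L P y →
        ghatBracket L x y + ghatBracket L y x = ghatPar L (P x.2 y.2))
    -- the exact sequence `0 → Ω¹ → ĝ → g → 0`
    ∧ (∀ b : A, L.anchor b = 0 → ∃ x, IsGhat L P x ∧ x.2 = b)
    ∧ (∀ x, IsGhat L P x → x.2 = 0 → ∀ c : A, L.anchor c = 0 → x.1 c = 0) :=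
  ghat_is_courant_extension_of_g_general L P P_symm P_invar hsplit
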